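/- Assume Assumption (β) and let Ω ⊆ V be nonempty; set m_Ω = inf{ β⁺(x)/m(x) : x ∈ Ω }. Then m_Ω · h̃(Ω)²/8 ≤ ν(Δ^D_Ω). -/

import Mathlib

/-!
Put `g = |f|²`. Under `β⁺ = β⁻` the quadratic form is the Dirichlet energy,
`Re (Δf, f)_m = ½ Σ_{x,y} b(x,y) |f(x) - f(y)|²`. Slicing `g` into its level sets
(co-area) bounds `h̃(Ω) Σ β⁺ g` by `Σ b |g(x) - g(y)|`, and since
`|g(x) - g(y)| ≤ |f(x) - f(y)| (|f(x)| + |f(y)|)`, Cauchy–Schwarz bounds this by the square root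
of `2 Re (Δf, f)_m · 4 Σ β⁺ g`. Hence `h̃(Ω)² Σ β⁺ g ≤ 8 Re (Δf, f)_m`, while
`Σ β⁺ g ≥ m_Ω Σ m g = m_Ω` when `‖f‖_m = 1`.
-/

open Function Complex

noncomputable def betaPlus {V : Type*} (b : V → V → ℝ) (x : V) : ℝ := ∑ᶠ y, b x y
noncomputable def betaMinus {V : Type*} (b : V → V → ℝ) (x : V) : ℝ := ∑ᶠ y, b y x

/-- The Laplacian `Δf(x) = (1/m(x)) Σ_y b(x,y)(f(x) - f(y))`; the normalized Laplacian
`Δ̃` is the case `m = β⁺`. -/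
noncomputable def lap {V : Type*} (b : V → V → ℝ) (m : V → ℝ) (f : V → ℂ) (x : V) : ℂ :=
  (1 / (m x : ℂ)) * ∑ᶠ y, (b x y : ℂ) * (f x - f y)

/-- The weighted inner product `(f,g)_w = Σ_x w(x) f(x) conj(g(x))`. -/
noncomputable def innerW {V : Type*} (w : V → ℝ) (f g : V → ℂ) : ℂ :=
  ∑ᶠ x, (w x : ℂ) * f x * (starRingEnd ℂ) (g x)

/-- The total edge-boundary weight of a finite set `U`:
`b(∂_E U) = Σ_{x∈U, y∉U} b(x,y) + Σ_{x∉U, y∈U} b(x,y)`. -/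
noncomputable def bdryWeight {V : Type*} [DecidableEq V] (b : V → V → ℝ) (U : Finset V) :
    ℝ :=
  ∑ x ∈ U, ∑ᶠ y, (if y ∈ U then 0 else b x y + b y x)

/-- The Cheeger constant of `Ω ⊆ V` with respect to the weight `w`:
`h(Ω) = inf { b(∂_E U) / w(U) : U ⊆ Ω finite nonempty }`. -/
noncomputable def cheeger {V : Type*} [DecidableEq V] (b : V → V → ℝ) (w : V → ℝ)
    (Ω : Set V) : ℝ :=
  sInf {r : ℝ | ∃ U : Finset V, U.Nonempty ∧ ↑U ⊆ Ω ∧ r = bdryWeight b U / ∑ x ∈ U, w x}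

/-- The bottom of the real part of the numerical range of the Dirichlet Laplacian on `Ω`:
`ν(Δ^D_Ω) = inf { Re (Δf, f)_m : f finitely supported, supp f ⊆ Ω, ‖f‖_m = 1 }`. -/
noncomputable def nuD {V : Type*} (b : V → V → ℝ) (m : V → ℝ) (Ω : Set V) : ℝ :=
  sInf {r : ℝ | ∃ f : V → ℂ, (support f).Finite ∧ support f ⊆ Ω ∧
    innerW m f f = 1 ∧ r = (innerW m (lap b m f) f).re}

open Finset

section Graph

variable {V : Type*} {b : V → V → ℝ}

def CoversNbhdOfSupport {α : Type*} [Zero α] (b : V → V → ℝ) (g : V → α) (T : Finset V) :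
    Prop :=
  ∀ x, g x ≠ 0 → x ∈ T ∧ ∀ y, b x y ≠ 0 ∨ b y x ≠ 0 → y ∈ T

lemma exists_coversNbhdOfSupport {α : Type*} [Zero α]
    (hloc : ∀ x, {y | b x y ≠ 0 ∨ b y x ≠ 0}.Finite) {g : V → α} (hg : (support g).Finite) :
    ∃ T, CoversNbhdOfSupport b g T := by
  classical
  refine ⟨hg.toFinset ∪ hg.toFinset.biUnion fun x => (hloc x).toFinset, fun x hx => ?_⟩
  refine ⟨mem_union_left _ (hg.mem_toFinset.2 hx), fun y hy => mem_union_right _ ?_⟩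
  exact mem_biUnion.2 ⟨x, hg.mem_toFinset.2 hx, (hloc x).mem_toFinset.2 hy⟩

namespace CoversNbhdOfSupport

variable {α β : Type*} [Zero α] [Zero β] {g : V → α} {T : Finset V}

lemma mono {g' : V → β} (hT : CoversNbhdOfSupport b g T) (h : support g' ⊆ support g) :
    CoversNbhdOfSupport b g' T :=
  fun x hx => hT x (h hx)

lemma support_subset (hT : CoversNbhdOfSupport b g T) : support g ⊆ T :=
  fun x hx => (hT x hx).1

lemma betaPlus_eq (hT : CoversNbhdOfSupport b g T) {x : V} (hx : g x ≠ 0) :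
    betaPlus b x = ∑ y ∈ T, b x y :=
  finsum_eq_finsetSum_of_support_subset _ fun y hy => (hT x hx).2 y (Or.inl hy)

lemma betaMinus_eq (hT : CoversNbhdOfSupport b g T) {x : V} (hx : g x ≠ 0) :
    betaMinus b x = ∑ y ∈ T, b y x :=
  finsum_eq_finsetSum_of_support_subset _ fun y hy => (hT x hx).2 y (Or.inr hy)

lemma sum_sum_mul_left {g : V → ℝ} (hT : CoversNbhdOfSupport b g T) :
    ∑ x ∈ T, ∑ y ∈ T, b x y * g x = ∑ x ∈ T, betaPlus b x * g x := by
  refine sum_congr rfl fun x _ => ?_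
  rw [← sum_mul]
  by_cases hx : g x = 0
  · simp [hx]
  · rw [hT.betaPlus_eq hx]

lemma sum_sum_mul_right {g : V → ℝ} (hT : CoversNbhdOfSupport b g T) :
    ∑ x ∈ T, ∑ y ∈ T, b x y * g y = ∑ y ∈ T, betaMinus b y * g y := by
  rw [sum_comm]
  refine sum_congr rfl fun y _ => ?_
  rw [← sum_mul]
  by_cases hy : g y = 0
  · simp [hy]
  · rw [hT.betaMinus_eq hy]

end CoversNbhdOfSupport

lemma support_norm_sq {E : Type*} [NormedAddCommGroup E] (f : V → E) :
    support (fun x => ‖f x‖ ^ 2) = support f := by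
  ext x
  simp

lemma betaPlus_nonneg (hb : ∀ x y, 0 ≤ b x y) (x : V) : 0 ≤ betaPlus b x :=
  finsum_nonneg (hb x)

lemma innerW_eq_sum {w : V → ℝ} {f g : V → ℂ} {T : Finset V} (hg : support g ⊆ T) :
    innerW w f g = ∑ x ∈ T, (w x : ℂ) * f x * starRingEnd ℂ (g x) :=
  finsum_eq_finsetSum_of_support_subset _ fun x hx => hg fun h => hx (by simp [h])

lemma innerW_self_eq_sum {w : V → ℝ} {f : V → ℂ} {T : Finset V} (hf : support f ⊆ T) :
    innerW w f f = ((∑ x ∈ T, w x * ‖f x‖ ^ 2 : ℝ) : ℂ) := by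
  rw [innerW_eq_sum hf]
  push_cast
  refine sum_congr rfl fun x _ => ?_
  rw [mul_assoc, mul_conj, normSq_eq_norm_sq]
  push_cast
  ring

lemma re_sub_mul_conj (z w : ℂ) :
    ((z - w) * starRingEnd ℂ z).re = (‖z - w‖ ^ 2 + ‖z‖ ^ 2 - ‖w‖ ^ 2) / 2 := by
  simp only [← normSq_eq_norm_sq, normSq_apply, mul_re, sub_re, sub_im, conj_re, conj_im]
  ring

lemma CoversNbhdOfSupport.re_innerW_lap {m : V → ℝ} (hm : ∀ x, m x ≠ 0) {f : V → ℂ}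
    {T : Finset V} (hT : CoversNbhdOfSupport b f T) :
    (innerW m (lap b m f) f).re =
      ∑ x ∈ T, ∑ y ∈ T, b x y * ((f x - f y) * starRingEnd ℂ (f x)).re := by
  rw [innerW_eq_sum hT.support_subset, re_sum]
  refine sum_congr rfl fun x _ => ?_
  by_cases hx : f x = 0
  · simp [hx]
  have hsum : ∑ᶠ y, (b x y : ℂ) * (f x - f y) = ∑ y ∈ T, (b x y : ℂ) * (f x - f y) :=
    finsum_eq_finsetSum_of_support_subset _ fun y hy =>
      (hT x hx).2 y (Or.inl fun h => hy (by simp [h]))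
  rw [lap, ← mul_assoc, mul_one_div_cancel (ofReal_ne_zero.2 (hm x)), one_mul, hsum, sum_mul,
    re_sum]
  simp only [mul_assoc, re_ofReal_mul]

theorem re_innerW_lap_self_eq_energy (hβ : ∀ x, betaPlus b x = betaMinus b x) {m : V → ℝ}
    (hm : ∀ x, m x ≠ 0) {f : V → ℂ} {T : Finset V} (hT : CoversNbhdOfSupport b f T) :
    (innerW m (lap b m f) f).re = (∑ x ∈ T, ∑ y ∈ T, b x y * ‖f x - f y‖ ^ 2) / 2 := by
  have hT' : CoversNbhdOfSupport b (fun x => ‖f x‖ ^ 2) T := hT.mono (support_norm_sq f).subset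
  have hbal : ∑ x ∈ T, ∑ y ∈ T, b x y * ‖f x‖ ^ 2 = ∑ x ∈ T, ∑ y ∈ T, b x y * ‖f y‖ ^ 2 := by
    rw [hT'.sum_sum_mul_left, hT'.sum_sum_mul_right]
    simp only [hβ]
  rw [hT.re_innerW_lap hm]
  simp only [re_sub_mul_conj, mul_div_assoc', mul_add, mul_sub, add_div, sub_div, sum_add_distrib,
    sum_sub_distrib, ← sum_div, hbal]
  ring

lemma abs_sub_eq_abs_min_sub_min_add_abs_max_sub_max (a a' c : ℝ) :
    |a - a'| = |min a c - min a' c| + |max (a - c) 0 - max (a' - c) 0| := by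
  grind

lemma bdryWeight_nonneg [DecidableEq V] (hb : ∀ x y, 0 ≤ b x y) (U : Finset V) :
    0 ≤ bdryWeight b U :=
  sum_nonneg fun x _ => finsum_nonneg fun y => by
    split_ifs
    exacts [le_rfl, add_nonneg (hb x y) (hb y x)]

lemma cheeger_mul_sum_le_bdryWeight [DecidableEq V] (hb : ∀ x y, 0 ≤ b x y) {w : V → ℝ}
    (hw : ∀ x, 0 ≤ w x) {Ω : Set V} {U : Finset V} (hU : U.Nonempty) (hUΩ : ↑U ⊆ Ω) :
    cheeger b w Ω * ∑ x ∈ U, w x ≤ bdryWeight b U := by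
  have hle : cheeger b w Ω ≤ bdryWeight b U / ∑ x ∈ U, w x := by
    refine csInf_le ⟨0, ?_⟩ ⟨U, hU, hUΩ, rfl⟩
    rintro _ ⟨U', -, -, rfl⟩
    exact div_nonneg (bdryWeight_nonneg hb U') (sum_nonneg fun x _ => hw x)
  rcases (sum_nonneg fun x _ => hw x : 0 ≤ ∑ x ∈ U, w x).eq_or_lt with h | h
  · rw [← h, mul_zero]
    exact bdryWeight_nonneg hb U
  · exact (le_div_iff₀ h).1 hle

lemma sum_sum_mul_abs_indicator_sub [DecidableEq V] {U T : Finset V} (hUT : U ⊆ T)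
    (hU : ∀ x ∈ U, ∀ y, b x y ≠ 0 ∨ b y x ≠ 0 → y ∈ T) :
    ∑ x ∈ T, ∑ y ∈ T, b x y * |(if x ∈ U then 1 else 0) - (if y ∈ U then 1 else 0)| =
      bdryWeight b U := by
  have hterm : ∀ x y, b x y * |(if x ∈ U then (1 : ℝ) else 0) - (if y ∈ U then 1 else 0)| =
      (if x ∈ U ∧ y ∉ U then b x y else 0) + (if y ∈ U ∧ x ∉ U then b x y else 0) := by
    intro x y
    by_cases hx : x ∈ U <;> by_cases hy : y ∈ U <;> simp [hx, hy]
  simp only [hterm, sum_add_distrib]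
  rw [sum_comm (f := fun x y => if y ∈ U ∧ x ∉ U then b x y else 0), ← sum_add_distrib]
  have hrow : ∀ x ∈ T, (∑ y ∈ T, if x ∈ U ∧ y ∉ U then b x y else 0) +
      (∑ y ∈ T, if x ∈ U ∧ y ∉ U then b y x else 0) =
      if x ∈ U then ∑ᶠ y, (if y ∈ U then 0 else b x y + b y x) else 0 := by
    intro x _
    split_ifs with hx
    · rw [finsum_eq_finsetSum_of_support_subset _ fun y hy => hU x hx y ?_, ← sum_add_distrib]
      · exact sum_congr rfl fun y _ => by by_cases hy : y ∈ U <;> simp [hx, hy]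
      · by_contra! h
        simp [h] at hy
    · simp [hx]
  rw [sum_congr rfl hrow, sum_ite_mem, inter_eq_right.2 hUT, bdryWeight]

lemma cheeger_mul_sum_mul_indicator_le [DecidableEq V] (hb : ∀ x y, 0 ≤ b x y) {w : V → ℝ}
    (hw : ∀ x, 0 ≤ w x) {Ω : Set V} {U T : Finset V} (hU : U.Nonempty) (hUΩ : ↑U ⊆ Ω)
    (hUT : U ⊆ T) (hUnbr : ∀ x ∈ U, ∀ y, b x y ≠ 0 ∨ b y x ≠ 0 → y ∈ T) {c : ℝ} (hc : 0 ≤ c) :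
    cheeger b w Ω * ∑ x ∈ T, w x * (c * if x ∈ U then 1 else 0) ≤
      ∑ x ∈ T, ∑ y ∈ T,
        b x y * |(c * if x ∈ U then 1 else 0) - (c * if y ∈ U then 1 else 0)| := by
  simp only [← mul_sub, abs_mul, abs_of_nonneg hc, mul_left_comm _ c, ← mul_sum]
  rw [sum_sum_mul_abs_indicator_sub hUT hUnbr]
  simp only [mul_ite, mul_one, mul_zero, sum_ite_mem]
  rw [inter_eq_right.2 hUT]
  exact mul_le_mul_of_nonneg_left (cheeger_mul_sum_le_bdryWeight hb hw hU hUΩ) hc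

theorem cheeger_mul_sum_le_sum_sum_mul_abs_sub [DecidableEq V] (hb : ∀ x y, 0 ≤ b x y)
    {w : V → ℝ} (hw : ∀ x, 0 ≤ w x) {Ω : Set V} {g : V → ℝ} (hg : ∀ x, 0 ≤ g x)
    (hgΩ : support g ⊆ Ω) {T : Finset V} (hT : CoversNbhdOfSupport b g T) :
    cheeger b w Ω * ∑ x ∈ T, w x * g x ≤ ∑ x ∈ T, ∑ y ∈ T, b x y * |g x - g y| := by
  induction hn : (T.filter (g · ≠ 0)).card using Nat.strong_induction_on generalizing g with
  | _ n ih =>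
  set U := T.filter (g · ≠ 0)
  have hmemU : ∀ x, x ∈ U ↔ g x ≠ 0 := fun x =>
    ⟨fun hx => (mem_filter.1 hx).2, fun hx => mem_filter.2 ⟨(hT x hx).1, hx⟩⟩
  rcases U.eq_empty_or_nonempty with hUe | hU
  · have hzero : ∀ x, g x = 0 := fun x => by simpa [hUe] using hmemU x
    simp [hzero]
  set c := U.inf' hU g
  have hc : ∀ x, g x ≠ 0 → c ≤ g x := fun x hx => inf'_le g ((hmemU x).2 hx)
  obtain ⟨x₀, hx₀U, hx₀⟩ := U.exists_mem_eq_inf' hU g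
  have hcx₀ : c = g x₀ := hx₀
  have hc_pos : 0 < c := hcx₀ ▸ (hg x₀).lt_of_ne' ((hmemU x₀).1 hx₀U)
  -- Truncating at the least positive value `c` splits `g` into the layer `min g c = c • 1_U`,
  -- controlled by the Cheeger constant, and `max (g - c) 0`, which vanishes at `x₀`.
  have hlayer : ∀ x, min (g x) c = c * if x ∈ U then 1 else 0 := fun x => by
    by_cases hx : g x = 0
    · have hxU : x ∉ U := fun h => (hmemU x).1 h hx
      simp [hx, hxU, hc_pos.le]
    · simp [(hmemU x).2 hx, hc x hx]
  set g' := fun x => max (g x - c) 0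
  have hg'g : ∀ x, g' x ≠ 0 → g x ≠ 0 := fun x hx h => hx (by simp [g', h, hc_pos.le])
  have hU' : T.filter (g' · ≠ 0) ⊂ U := by
    refine ssubset_iff_of_subset (fun x hx => ?_) |>.2 ⟨x₀, hx₀U, fun hx => ?_⟩
    · exact mem_filter.2 ⟨(mem_filter.1 hx).1, hg'g x (mem_filter.1 hx).2⟩
    · exact (mem_filter.1 hx).2 (by simp [g', hcx₀])
  have hrest := ih _ (hn ▸ card_lt_card hU') (fun x => le_max_right _ _)
    ((support_subset_iff.2 hg'g).trans hgΩ) (hT.mono (support_subset_iff.2 hg'g)) rfl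
  have hbottom : cheeger b w Ω * ∑ x ∈ T, w x * min (g x) c ≤
      ∑ x ∈ T, ∑ y ∈ T, b x y * |min (g x) c - min (g y) c| := by
    simpa only [hlayer] using cheeger_mul_sum_mul_indicator_le hb hw hU
      (fun x hx => hgΩ ((hmemU x).1 hx)) (filter_subset _ T)
      (fun x hx => (hT x ((hmemU x).1 hx)).2) hc_pos.le
  have hsplit : ∀ x, g x = min (g x) c + g' x := fun x => by grind
  calc cheeger b w Ω * ∑ x ∈ T, w x * g x
      = cheeger b w Ω * ∑ x ∈ T, w x * min (g x) c + cheeger b w Ω * ∑ x ∈ T, w x * g' x := by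
        rw [← mul_add, ← sum_add_distrib]
        simp only [← mul_add, ← hsplit]
    _ ≤ _ := add_le_add hbottom hrest
    _ = _ := by
        simp only [← sum_add_distrib, ← mul_add,
          ← abs_sub_eq_abs_min_sub_min_add_abs_max_sub_max]

lemma sq_sub_sq_norm_sq_le {E : Type*} [SeminormedAddCommGroup E] (u v : E) :
    (‖u‖ ^ 2 - ‖v‖ ^ 2) ^ 2 ≤ ‖u - v‖ ^ 2 * (2 * (‖u‖ ^ 2 + ‖v‖ ^ 2)) := by
  have h := abs_norm_sub_norm_le u v
  have hsq : (‖u‖ - ‖v‖) ^ 2 ≤ ‖u - v‖ ^ 2 := sq_le_sq' (abs_le.1 h).1 (abs_le.1 h).2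
  calc (‖u‖ ^ 2 - ‖v‖ ^ 2) ^ 2 = (‖u‖ - ‖v‖) ^ 2 * (‖u‖ + ‖v‖) ^ 2 := by ring
    _ ≤ ‖u - v‖ ^ 2 * (2 * (‖u‖ ^ 2 + ‖v‖ ^ 2)) := by
      gcongr
      nlinarith [sq_nonneg (‖u‖ - ‖v‖)]

lemma sq_sum_sum_mul_abs_sub_sq_norm_le {E : Type*} [SeminormedAddCommGroup E]
    (hb : ∀ x y, 0 ≤ b x y) (T : Finset V) (f : V → E) :
    (∑ x ∈ T, ∑ y ∈ T, b x y * |‖f x‖ ^ 2 - ‖f y‖ ^ 2|) ^ 2 ≤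
      (∑ x ∈ T, ∑ y ∈ T, b x y * ‖f x - f y‖ ^ 2) *
        ∑ x ∈ T, ∑ y ∈ T, b x y * (2 * (‖f x‖ ^ 2 + ‖f y‖ ^ 2)) := by
  simp only [← sum_product']
  refine sum_sq_le_sum_mul_sum_of_sq_le_mul _ (fun p _ => mul_nonneg (hb _ _) (by positivity))
    (fun p _ => mul_nonneg (hb _ _) (by positivity)) fun p _ => ?_
  calc (b p.1 p.2 * |‖f p.1‖ ^ 2 - ‖f p.2‖ ^ 2|) ^ 2
      = b p.1 p.2 ^ 2 * (‖f p.1‖ ^ 2 - ‖f p.2‖ ^ 2) ^ 2 := by rw [mul_pow, sq_abs]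
    _ ≤ b p.1 p.2 ^ 2 * (‖f p.1 - f p.2‖ ^ 2 * (2 * (‖f p.1‖ ^ 2 + ‖f p.2‖ ^ 2))) := by
      gcongr; exact sq_sub_sq_norm_sq_le _ _
    _ = _ := by ring

theorem cheeger_sq_mul_le_energy [DecidableEq V] (hb : ∀ x y, 0 ≤ b x y)
    (hβ : ∀ x, betaPlus b x = betaMinus b x) {Ω : Set V} {f : V → ℂ} (hfΩ : support f ⊆ Ω)
    {T : Finset V} (hT : CoversNbhdOfSupport b f T) :
    cheeger b (betaPlus b) Ω ^ 2 * ∑ x ∈ T, betaPlus b x * ‖f x‖ ^ 2 ≤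
      4 * ∑ x ∈ T, ∑ y ∈ T, b x y * ‖f x - f y‖ ^ 2 := by
  set h := cheeger b (betaPlus b) Ω
  set S := ∑ x ∈ T, betaPlus b x * ‖f x‖ ^ 2
  set R := ∑ x ∈ T, ∑ y ∈ T, b x y * ‖f x - f y‖ ^ 2
  have hT' : CoversNbhdOfSupport b (fun x => ‖f x‖ ^ 2) T := hT.mono (support_norm_sq f).subset
  have hcoarea : h * S ≤ ∑ x ∈ T, ∑ y ∈ T, b x y * |‖f x‖ ^ 2 - ‖f y‖ ^ 2| :=
    cheeger_mul_sum_le_sum_sum_mul_abs_sub hb (betaPlus_nonneg hb) (fun x => by positivity)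
      ((support_norm_sq f).subset.trans hfΩ) hT'
  have hmass : ∑ x ∈ T, ∑ y ∈ T, b x y * (2 * (‖f x‖ ^ 2 + ‖f y‖ ^ 2)) = 4 * S := by
    simp only [mul_left_comm _ (2 : ℝ), mul_add, sum_add_distrib, ← mul_sum,
      hT'.sum_sum_mul_left, hT'.sum_sum_mul_right, ← hβ]
    ring
  have hh : 0 ≤ h := Real.sInf_nonneg fun r ⟨U, _, _, hr⟩ =>
    hr ▸ div_nonneg (bdryWeight_nonneg hb U) (sum_nonneg fun x _ => betaPlus_nonneg hb x)
  have hS : 0 ≤ S := sum_nonneg fun x _ => by have := betaPlus_nonneg hb x; positivity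
  have hsq : (h * S) ^ 2 ≤ R * (4 * S) := hmass ▸
    (pow_le_pow_left₀ (by positivity) hcoarea 2).trans (sq_sum_sum_mul_abs_sub_sq_norm_le hb T f)
  rcases hS.eq_or_lt with hS0 | hSpos
  · rw [← hS0, mul_zero]
    exact mul_nonneg zero_le_four (sum_nonneg fun x _ => sum_nonneg fun y _ => by
      have := hb x y; positivity)
  · nlinarith

lemma sInf_div_mul_sum_le {w m g : V → ℝ} (hw : ∀ x, 0 ≤ w x) (hm : ∀ x, 0 < m x)
    (hg : ∀ x, 0 ≤ g x) {Ω : Set V} (hgΩ : support g ⊆ Ω) (T : Finset V) :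
    sInf {r : ℝ | ∃ x ∈ Ω, r = w x / m x} * ∑ x ∈ T, m x * g x ≤ ∑ x ∈ T, w x * g x := by
  rw [mul_sum]
  refine sum_le_sum fun x _ => ?_
  by_cases hx : g x = 0
  · simp [hx]
  have hle : sInf {r : ℝ | ∃ x ∈ Ω, r = w x / m x} ≤ w x / m x :=
    csInf_le ⟨0, fun r ⟨y, _, hr⟩ => hr ▸ div_nonneg (hw y) (hm y).le⟩ ⟨x, hgΩ hx, rfl⟩
  rw [← mul_assoc]
  exact mul_le_mul_of_nonneg_right ((le_div_iff₀ (hm x)).1 hle) (hg x)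

lemma le_nuD [DecidableEq V] {m : V → ℝ} (hm : ∀ x, 0 < m x) {Ω : Set V}
    (hΩ : Ω.Nonempty) {c : ℝ}
    (h : ∀ f : V → ℂ, (support f).Finite → support f ⊆ Ω → innerW m f f = 1 →
      c ≤ (innerW m (lap b m f) f).re) :
    c ≤ nuD b m Ω := by
  obtain ⟨x₀, hx₀⟩ := hΩ
  set f₀ : V → ℂ := Pi.single x₀ ((√(m x₀))⁻¹ : ℝ)
  have hf₀ : support f₀ ⊆ ({x₀} : Finset V) := by
    simpa using Pi.support_single_subset
  have hnorm : innerW m f₀ f₀ = 1 := by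
    rw [innerW_self_eq_sum hf₀, sum_singleton]
    simp [f₀, inv_pow, Real.sq_sqrt (hm x₀).le, (hm x₀).ne']
  refine le_csInf ⟨_, f₀, (finite_toSet _).subset hf₀, hf₀.trans (by simpa using hx₀), hnorm,
    rfl⟩ ?_
  rintro _ ⟨f, hf_fin, hfΩ, hf_norm, rfl⟩
  exact h f hf_fin hfΩ hf_norm

end Graph

theorem cheeger_lower_bound_weighted_general
    (V : Type*) [DecidableEq V] (b : V → V → ℝ) (m : V → ℝ)
    (hb_nonneg : ∀ x y, 0 ≤ b x y)
    (hloc_fin : ∀ x, {y | b x y ≠ 0 ∨ b y x ≠ 0}.Finite)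
    (hm_pos : ∀ x, 0 < m x)
    (hβ : ∀ x, betaPlus b x = betaMinus b x)
    (Ω : Set V) (hΩ : Ω.Nonempty) :
    sInf {r : ℝ | ∃ x ∈ Ω, r = betaPlus b x / m x} *
        (cheeger b (betaPlus b) Ω) ^ 2 / 8
      ≤ nuD b m Ω := by
  refine le_nuD hm_pos hΩ fun f hf_fin hfΩ hf_norm => ?_
  obtain ⟨T, hT⟩ := exists_coversNbhdOfSupport hloc_fin hf_fin
  have hmass : ∑ x ∈ T, m x * ‖f x‖ ^ 2 = 1 := by
    exact_mod_cast (innerW_self_eq_sum hT.support_subset).symm.trans hf_norm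
  have hinf := sInf_div_mul_sum_le (betaPlus_nonneg hb_nonneg) hm_pos (fun x => sq_nonneg ‖f x‖)
    ((support_norm_sq f).subset.trans hfΩ) T
  have henergy := cheeger_sq_mul_le_energy hb_nonneg hβ hfΩ hT
  rw [re_innerW_lap_self_eq_energy hβ (fun x => (hm_pos x).ne') hT]
  rw [hmass, mul_one] at hinf
  nlinarith [sq_nonneg (cheeger b (betaPlus b) Ω)]

/-- assume Assumption (β), let `Ω ⊆ V` be nonempty and set
`m_Ω = inf { β⁺(x)/m(x) : x ∈ Ω }`. Then `m_Ω h̃(Ω)²/8 ≤ ν(Δ^D_Ω)`. -/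
theorem cheeger_lower_bound_weighted
    (V : Type*) [Countable V] [DecidableEq V] (b : V → V → ℝ) (m : V → ℝ)
    (hb_nonneg : ∀ x y, 0 ≤ b x y)
    (hb_loop : ∀ x, b x x = 0)
    (hloc_fin : ∀ x, {y | b x y ≠ 0 ∨ b y x ≠ 0}.Finite)
    (hm_pos : ∀ x, 0 < m x)
    (hβp_pos : ∀ x, 0 < betaPlus b x)
    (hβm_pos : ∀ x, 0 < betaMinus b x)
    (hβ : ∀ x, betaPlus b x = betaMinus b x)
    (Ω : Set V) (hΩ : Ω.Nonempty) :
    sInf {r : ℝ | ∃ x ∈ Ω, r = betaPlus b x / m x} *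
        (cheeger b (betaPlus b) Ω) ^ 2 / 8
      ≤ nuD b m Ω :=
  cheeger_lower_bound_weighted_general V b m hb_nonneg hloc_fin hm_pos hβ Ω hΩ
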